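/- arXiv:2410.20782 — 2 statements merged into one kernel-verified Lean document; each statement's English description precedes it below -/
import Mathlib

section
/- The integral identity for the pressure: let $(f, \Lambda_\pm, \hat{\Lambda}_\pm, p, \hat{p})$ be a smooth solution of the 2D MHD current-vortex sheet system in Elsässer variables, with all unknowns and their first derivatives vanishing as $x_1 \to +\infty$. Then for every $x_1 \in \mathbb{R}$ and $t$: $\int_{-1}^{f(t,x_1)} p\,dx_2 + \int_{f(t,x_1)}^{1} \hat{p}\,dx_2 + \int_{-1}^{f} \Lambda_-^1 \Lambda_+^1\,dx_2 + \int_{f}^{1} \hat{\Lambda}_-^1 \hat{\Lambda}_+^1\,dx_2 = 0$. -/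
open MeasureTheory

/-- The planar gradient of a scalar function, `∇u = (∂₁u, ∂₂u)`. -/
noncomputable def grad2 (u : ℝ × ℝ → ℝ) (x : ℝ × ℝ) : ℝ × ℝ :=
  (fderiv ℝ u x (1, 0), fderiv ℝ u x (0, 1))

/-- The planar divergence of a vector field, `div v = ∂₁v¹ + ∂₂v²`. -/
noncomputable def div2 (v : ℝ × ℝ → ℝ × ℝ) (x : ℝ × ℝ) : ℝ :=
  (fderiv ℝ v x (1, 0)).1 + (fderiv ℝ v x (0, 1)).2

/-- The convective derivative `(a · ∇) v`. -/
noncomputable def convDeriv (a : ℝ × ℝ) (v : ℝ × ℝ → ℝ × ℝ) (x : ℝ × ℝ) : ℝ × ℝ :=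
  a.1 • fderiv ℝ v x (1, 0) + a.2 • fderiv ℝ v x (0, 1)

/-- Dot product in `ℝ²`. -/
def dot2 (a b : ℝ × ℝ) : ℝ := a.1 * b.1 + a.2 * b.2

/-- The (non-unit) outward normal `N_f = (-∂₁f, 1)` to the graph of `f t`. -/
noncomputable def Nf (f : ℝ → ℝ → ℝ) (t x₁ : ℝ) : ℝ × ℝ := (-(deriv (f t) x₁), 1)



open MeasureTheory intervalIntegral Set Metric Filter
open scoped Topology Interval

lemma hasDerivAt_slice1 {E : Type*} [NormedAddCommGroup E] [NormedSpace ℝ E]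
    {G : ℝ × ℝ → E} (hG : Differentiable ℝ G) (y s : ℝ) :
    HasDerivAt (fun s => G (s, y)) (fderiv ℝ G (s, y) (1, 0)) s := by
  have h : HasDerivAt (fun s : ℝ => ((s, y) : ℝ × ℝ)) (1, 0) s :=
    (hasDerivAt_id s).prodMk (hasDerivAt_const s y)
  exact (hG (s, y)).hasFDerivAt.comp_hasDerivAt s h

lemma hasDerivAt_slice2 {E : Type*} [NormedAddCommGroup E] [NormedSpace ℝ E]
    {G : ℝ × ℝ → E} (hG : Differentiable ℝ G) (x y : ℝ) :
    HasDerivAt (fun y => G (x, y)) (fderiv ℝ G (x, y) (0, 1)) y := by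
  have h : HasDerivAt (fun y : ℝ => ((x, y) : ℝ × ℝ)) (0, 1) y :=
    (hasDerivAt_const y x).prodMk (hasDerivAt_id y)
  exact (hG (x, y)).hasFDerivAt.comp_hasDerivAt y h

lemma cont_slice2 {E : Type*} [NormedAddCommGroup E] [NormedSpace ℝ E]
    {G : ℝ × ℝ → E} (hG : Continuous G) (x : ℝ) :
    Continuous (fun y => G (x, y)) :=
  hG.comp (continuous_const.prodMk continuous_id)

lemma contDiff_fderiv_apply {G : ℝ × ℝ → ℝ} (hG : ContDiff ℝ (⊤ : ℕ∞) G) (v : ℝ × ℝ) :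
    Continuous (fun z => fderiv ℝ G z v) :=
  (hG.continuous_fderiv (by simp)).clm_apply continuous_const

/-- Leibniz rule with moving upper limit. -/
lemma leibniz_upper {G : ℝ × ℝ → ℝ} (hG : ContDiff ℝ (⊤ : ℕ∞) G) (a : ℝ) {b : ℝ → ℝ} {s₀ b' : ℝ}
    (hb : HasDerivAt b b' s₀) :
    HasDerivAt (fun s => ∫ y in a..b s, G (s, y))
      (b' * G (s₀, b s₀) + ∫ y in a..b s₀, fderiv ℝ G (s₀, y) (1, 0)) s₀ := by
  have hGc : Continuous G := hG.continuous
  have hGd : Differentiable ℝ G := hG.differentiable (by simp)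
  have hfd1 : Continuous (fun z : ℝ × ℝ => fderiv ℝ G z (1, 0)) := contDiff_fderiv_apply hG _
  set K : Set (ℝ × ℝ) := closedBall s₀ 1 ×ˢ Icc (min a (b s₀) - 1) (max a (b s₀) + 1) with hKdef
  obtain ⟨C, hC⟩ : ∃ C, ∀ z ∈ K, ‖fderiv ℝ G z‖ ≤ C := by
    have hK : IsCompact K := (isCompact_closedBall _ _).prod isCompact_Icc
    exact hK.exists_bound_of_continuousOn (hG.continuous_fderiv (by simp)).continuousOn
  have hCapp : ∀ z ∈ K, ‖fderiv ℝ G z (1, 0)‖ ≤ C := by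
    intro z hz
    refine le_trans ((fderiv ℝ G z).le_opNorm _) ?_
    have h1 : ‖((1 : ℝ), (0 : ℝ))‖ = 1 := by
      simp [Prod.norm_def]
    rw [h1, mul_one]; exact hC z hz
  have hmemK : ∀ x y, x ∈ closedBall s₀ 1 → y ∈ Ι a (b s₀) → (x, y) ∈ K := by
    intro x y hx hy
    have hy' := uIoc_subset_uIcc hy
    rw [mem_uIcc] at hy'
    refine ⟨hx, ?_, ?_⟩
    · rcases hy' with ⟨h1, h2⟩ | ⟨h1, h2⟩ <;>
        nlinarith [min_le_left a (b s₀), min_le_right a (b s₀)]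
    · rcases hy' with ⟨h1, h2⟩ | ⟨h1, h2⟩ <;>
        nlinarith [le_max_left a (b s₀), le_max_right a (b s₀)]
  -- φ₁
  have hφ₁ : HasDerivAt (fun s => ∫ y in a..b s, G (s₀, y)) (G (s₀, b s₀) * b') s₀ := by
    have hcont : Continuous (fun y => G (s₀, y)) := cont_slice2 hGc s₀
    have hftc : HasDerivAt (fun u => ∫ y in a..u, G (s₀, y)) (G (s₀, b s₀)) (b s₀) :=
      integral_hasDerivAt_right (hcont.intervalIntegrable _ _)
        (hcont.stronglyMeasurableAtFilter _ _) hcont.continuousAt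
    exact HasDerivAt.comp s₀ hftc hb
  -- φ₂
  have hφ₂ : HasDerivAt (fun s => ∫ y in a..b s₀, (G (s, y) - G (s₀, y)))
      (∫ y in a..b s₀, fderiv ℝ G (s₀, y) (1, 0)) s₀ := by
    have H := intervalIntegral.hasDerivAt_integral_of_dominated_loc_of_deriv_le
      (μ := volume) (F := fun s y => G (s, y) - G (s₀, y))
      (F' := fun s y => fderiv ℝ G (s, y) (1, 0)) (x₀ := s₀) (a := a) (b := b s₀)
      (bound := fun _ => C) (ball_mem_nhds s₀ one_pos)
      (Filter.Eventually.of_forall fun x =>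
        ((cont_slice2 hGc x).sub (cont_slice2 hGc s₀)).aestronglyMeasurable)
      (by simp)
      ((hfd1.comp (continuous_const.prodMk continuous_id)).aestronglyMeasurable)
      (Filter.Eventually.of_forall fun y hy x hx =>
        hCapp (x, y) (hmemK x y (ball_subset_closedBall hx) hy))
      intervalIntegrable_const
      (Filter.Eventually.of_forall fun y hy x hx =>
        (hasDerivAt_slice1 hGd y x).sub_const _)
    exact H.2
  -- φ₃
  have hφ₃ : HasDerivAt (fun s => ∫ y in b s₀..b s, (G (s, y) - G (s₀, y))) 0 s₀ := by
    rw [hasDerivAt_iff_isLittleO]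
    simp only [intervalIntegral.integral_same, sub_zero, smul_zero]
    have hbO : (fun s => b s - b s₀) =O[𝓝 s₀] (fun s => s - s₀) := hb.isBigO_sub
    have hbo1 : (fun s => b s - b s₀) =o[𝓝 s₀] (fun _ => (1 : ℝ)) := by
      rw [Asymptotics.isLittleO_one_iff]
      have := hb.continuousAt.tendsto
      simpa using (this.sub_const (b s₀))
    have hBigO : (fun s => ∫ y in b s₀..b s, (G (s, y) - G (s₀, y))) =O[𝓝 s₀]
        (fun s => (s - s₀) * (b s - b s₀)) := by
      rw [Asymptotics.isBigO_iff]
      refine ⟨C, ?_⟩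
      have hev : ∀ᶠ s in 𝓝 s₀, |s - s₀| ≤ 1 ∧ |b s - b s₀| ≤ 1 := by
        have h1 : ∀ᶠ s in 𝓝 s₀, |s - s₀| ≤ 1 := by
          have : Tendsto (fun s : ℝ => |s - s₀|) (𝓝 s₀) (𝓝 0) := by
            have : Tendsto (fun s : ℝ => s - s₀) (𝓝 s₀) (𝓝 0) := by
              simpa using (continuous_id.tendsto s₀).sub_const s₀
            simpa using this.abs
          exact this.eventually_le_const one_pos
        have h2 : ∀ᶠ s in 𝓝 s₀, |b s - b s₀| ≤ 1 := by
          have : Tendsto (fun s : ℝ => |b s - b s₀|) (𝓝 s₀) (𝓝 0) := by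
            have := (hb.continuousAt.tendsto.sub_const (b s₀))
            simpa using this.abs
          exact this.eventually_le_const one_pos
        exact h1.and h2
      filter_upwards [hev] with s hs
      rcases hs with ⟨hs1, hs2⟩
      have key : ∀ y ∈ Ι (b s₀) (b s), ‖G (s, y) - G (s₀, y)‖ ≤ C * |s - s₀| := by
        intro y hy
        have hy' := uIoc_subset_uIcc hy
        rw [mem_uIcc] at hy'
        have hyK : ∀ x ∈ closedBall s₀ 1, (x, y) ∈ K := by
          intro x hx
          rw [abs_le] at hs2
          have hb1 : min a (b s₀) ≤ b s₀ := min_le_right _ _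
          have hb2 : b s₀ ≤ max a (b s₀) := le_max_right _ _
          refine ⟨hx, ?_, ?_⟩
          · rcases hy' with ⟨h1, h2⟩ | ⟨h1, h2⟩ <;> linarith
          · rcases hy' with ⟨h1, h2⟩ | ⟨h1, h2⟩ <;> linarith
        have hconv : Convex ℝ K := (convex_closedBall _ _).prod (convex_Icc _ _)
        have := hconv.norm_image_sub_le_of_norm_fderiv_le
          (fun z _ => hGd z) hC ((hyK s₀ (mem_closedBall_self zero_le_one)))
          (hyK s (by rwa [mem_closedBall, dist_eq_norm, Real.norm_eq_abs]))
        calc ‖G (s, y) - G (s₀, y)‖ ≤ C * ‖((s : ℝ), y) - (s₀, y)‖ := this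
          _ = C * |s - s₀| := by
              congr 1
              simp [Prod.norm_def, Prod.sub_def, abs_nonneg]
      have hnorm := intervalIntegral.norm_integral_le_of_norm_le_const key
      refine le_trans hnorm ?_
      rw [Real.norm_eq_abs, abs_mul]
      ring_nf
      nlinarith [abs_nonneg (s - s₀), abs_nonneg (b s - b s₀)]
    have hsmall : (fun s => (s - s₀) * (b s - b s₀)) =o[𝓝 s₀] (fun s => s - s₀) := by
      have := (Asymptotics.isBigO_refl (fun s : ℝ => s - s₀) (𝓝 s₀)).mul_isLittleO hbo1
      simpa using this
    exact hBigO.trans_isLittleO hsmall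
  -- assembly
  have hsum := (hφ₁.fun_add hφ₂).fun_add hφ₃
  have heq : (fun s => ∫ y in a..b s, G (s, y)) =
      fun s => ((∫ y in a..b s, G (s₀, y)) + ∫ y in a..b s₀, (G (s, y) - G (s₀, y))) +
        ∫ y in b s₀..b s, (G (s, y) - G (s₀, y)) := by
    funext s
    have hint1 : IntervalIntegrable (fun y => G (s, y) - G (s₀, y)) volume a (b s₀) :=
      ((cont_slice2 hGc s).sub (cont_slice2 hGc s₀)).intervalIntegrable _ _
    have hint2 : IntervalIntegrable (fun y => G (s, y) - G (s₀, y)) volume (b s₀) (b s) :=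
      ((cont_slice2 hGc s).sub (cont_slice2 hGc s₀)).intervalIntegrable _ _
    rw [add_assoc, intervalIntegral.integral_add_adjacent_intervals hint1 hint2,
      intervalIntegral.integral_sub ((cont_slice2 hGc s).intervalIntegrable _ _)
        ((cont_slice2 hGc s₀).intervalIntegrable _ _)]
    ring
  rw [heq]
  refine hsum.congr_deriv ?_
  ring

/-- Leibniz rule with moving lower limit. -/
lemma leibniz_lower {G : ℝ × ℝ → ℝ} (hG : ContDiff ℝ (⊤ : ℕ∞) G) (c : ℝ) {b : ℝ → ℝ} {s₀ b' : ℝ}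
    (hb : HasDerivAt b b' s₀) :
    HasDerivAt (fun s => ∫ y in b s..c, G (s, y))
      (-(b' * G (s₀, b s₀)) + ∫ y in b s₀..c, fderiv ℝ G (s₀, y) (1, 0)) s₀ := by
  have h := (leibniz_upper hG c hb).neg
  have heq : (fun s => ∫ y in b s..c, G (s, y)) = fun s => -∫ y in c..b s, G (s, y) := by
    funext s
    exact intervalIntegral.integral_symm c (b s)
  rw [heq]
  exact h.congr_deriv (by rw [neg_add, ← intervalIntegral.integral_symm])

lemma integral_fderiv2 {φ : ℝ × ℝ → ℝ} (hφ : ContDiff ℝ (⊤ : ℕ∞) φ) (x₁ a b : ℝ) :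
    ∫ y in a..b, fderiv ℝ φ (x₁, y) (0, 1) = φ (x₁, b) - φ (x₁, a) :=
  intervalIntegral.integral_eq_sub_of_hasDerivAt
    (fun y _ => hasDerivAt_slice2 (hφ.differentiable (by simp)) x₁ y)
    (((contDiff_fderiv_apply hφ _).comp
      (continuous_const.prodMk continuous_id)).intervalIntegrable _ _)

lemma fderiv_fst' {v : ℝ × ℝ → ℝ × ℝ} (hv : Differentiable ℝ v) (z w : ℝ × ℝ) :
    fderiv ℝ (fun z => (v z).1) z w = (fderiv ℝ v z w).1 := by
  rw [((hv z).hasFDerivAt.fst).fderiv]; rfl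

lemma fderiv_snd' {v : ℝ × ℝ → ℝ × ℝ} (hv : Differentiable ℝ v) (z w : ℝ × ℝ) :
    fderiv ℝ (fun z => (v z).2) z w = (fderiv ℝ v z w).2 := by
  rw [((hv z).hasFDerivAt.snd).fderiv]; rfl

lemma fderiv_mul_apply {A B : ℝ × ℝ → ℝ} (hA : Differentiable ℝ A) (hB : Differentiable ℝ B)
    (z w : ℝ × ℝ) :
    fderiv ℝ (fun z => A z * B z) z w = fderiv ℝ A z w * B z + A z * fderiv ℝ B z w := by
  rw [((hA z).hasFDerivAt.fun_mul (hB z).hasFDerivAt).fderiv]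
  simp [smul_eq_mul]
  ring

lemma fderiv_add_apply {A B : ℝ × ℝ → ℝ} (hA : Differentiable ℝ A) (hB : Differentiable ℝ B)
    (z w : ℝ × ℝ) :
    fderiv ℝ (fun z => A z + B z) z w = fderiv ℝ A z w + fderiv ℝ B z w := by
  rw [fderiv_fun_add (hA z) (hB z)]; rfl

lemma contDiff_slice {E : Type*} [NormedAddCommGroup E] [NormedSpace ℝ E]
    {u : ℝ → ℝ × ℝ → E} (hu : ContDiff ℝ (⊤ : ℕ∞) (Function.uncurry u)) (t : ℝ) :
    ContDiff ℝ (⊤ : ℕ∞) (u t) :=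
  hu.comp (contDiff_const.prodMk contDiff_id)

lemma hasDerivAt_fst_comp {F : ℝ → ℝ × ℝ} {v : ℝ × ℝ} {x : ℝ} (h : HasDerivAt F v x) :
    HasDerivAt (fun s => (F s).1) v.1 x :=
  (ContinuousLinearMap.fst ℝ ℝ ℝ).hasFDerivAt.comp_hasDerivAt x h

/-- the time-slice `τ ↦ u τ x` has derivative given by the full fderiv of the uncurried map -/
lemma hasDerivAt_time_slice {u : ℝ → ℝ × ℝ → ℝ × ℝ} (hu : ContDiff ℝ (⊤ : ℕ∞) (Function.uncurry u))
    (x : ℝ × ℝ) (t : ℝ) :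
    HasDerivAt (fun τ => u τ x)
      (fderiv ℝ (Function.uncurry u) (t, x) (1, (0, 0))) t := by
  have hψ : HasDerivAt (fun τ : ℝ => ((τ, x) : ℝ × (ℝ × ℝ))) (1, (0, 0)) t :=
    (hasDerivAt_id t).prodMk (hasDerivAt_const _ _)
  exact ((hu.differentiable (by simp)) (t, x)).hasFDerivAt.comp_hasDerivAt t hψ

/-- the parametric integrand for the time derivative -/
lemma fderiv_param_fst {u : ℝ → ℝ × ℝ → ℝ × ℝ} (hu : ContDiff ℝ (⊤ : ℕ∞) (Function.uncurry u))
    (x₁ t y : ℝ) :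
    fderiv ℝ (fun sy : ℝ × ℝ => (u sy.1 (x₁, sy.2)).1) (t, y) (1, 0)
      = (deriv (fun τ => u τ (x₁, y)) t).1 := by
  have hud := hu.differentiable (by simp)
  have hψd : Differentiable ℝ (fun sy : ℝ × ℝ => ((sy.1, (x₁, sy.2)) : ℝ × (ℝ × ℝ))) :=
    differentiable_fst.prodMk ((differentiable_const _).prodMk differentiable_snd)
  have hGd : Differentiable ℝ (fun sy : ℝ × ℝ => (u sy.1 (x₁, sy.2)).1) :=
    Differentiable.fst ((hud.comp hψd : Differentiable ℝ _))
  have h1 := hasDerivAt_time_slice hu (x₁, y) t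
  have hA := hasDerivAt_slice1 (G := fun sy : ℝ × ℝ => (u sy.1 (x₁, sy.2)).1) hGd y t
  have hB := hasDerivAt_fst_comp h1
  rw [hA.unique hB, h1.deriv]

lemma contDiff_param_fst {u : ℝ → ℝ × ℝ → ℝ × ℝ} (hu : ContDiff ℝ (⊤ : ℕ∞) (Function.uncurry u))
    (x₁ : ℝ) :
    ContDiff ℝ (⊤ : ℕ∞) (fun sy : ℝ × ℝ => (u sy.1 (x₁, sy.2)).1) :=
  contDiff_fst.comp (hu.comp (contDiff_fst.prodMk (contDiff_const.prodMk contDiff_snd)))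

lemma cont_time_deriv_fst {u : ℝ → ℝ × ℝ → ℝ × ℝ} (hu : ContDiff ℝ (⊤ : ℕ∞) (Function.uncurry u))
    (x₁ t : ℝ) :
    Continuous (fun y => (deriv (fun τ => u τ (x₁, y)) t).1) := by
  have : (fun y => (deriv (fun τ => u τ (x₁, y)) t).1)
      = fun y => (fderiv ℝ (Function.uncurry u) (t, (x₁, y)) (1, (0, 0))).1 := by
    funext y
    rw [(hasDerivAt_time_slice hu (x₁, y) t).deriv]
  rw [this]
  apply Continuous.fst
  exact ((hu.continuous_fderiv (by simp)).clm_apply continuous_const).comp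
    (continuous_const.prodMk (continuous_const.prodMk continuous_id))

lemma cont_field1 {v : ℝ → ℝ × ℝ → ℝ × ℝ} (hv : ContDiff ℝ (⊤ : ℕ∞) (Function.uncurry v)) (τ s : ℝ) :
    Continuous fun y => (v τ (s, y)).1 :=
  continuous_fst.comp ((contDiff_slice hv τ).continuous.comp
    (continuous_const.prodMk continuous_id))

lemma cont_fderiv_dir {G : ℝ × ℝ → ℝ} (hG : ContDiff ℝ (⊤ : ℕ∞) G) (s : ℝ) (w : ℝ × ℝ) :
    Continuous fun y => fderiv ℝ G (s, y) w :=
  (contDiff_fderiv_apply hG w).comp (continuous_const.prodMk continuous_id)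

lemma lower_field_deriv {v : ℝ → ℝ × ℝ → ℝ × ℝ} (hv : ContDiff ℝ (⊤ : ℕ∞) (Function.uncurry v))
    {ft : ℝ → ℝ} {a fd : ℝ} (hfd : HasDerivAt ft fd a) (t : ℝ) (hc : (-1 : ℝ) ≤ ft a)
    (hdiv : ∀ y, -1 ≤ y → y ≤ ft a →
      (fderiv ℝ (v t) (a, y) (1, 0)).1 + (fderiv ℝ (v t) (a, y) (0, 1)).2 = 0)
    (hb : (v t (a, -1)).2 = 0) :
    HasDerivAt (fun s => ∫ y in (-1 : ℝ)..ft s, (v t (s, y)).1)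
      (fd * (v t (a, ft a)).1 - (v t (a, ft a)).2) a := by
  have hvd : Differentiable ℝ (v t) := (contDiff_slice hv t).differentiable (by simp)
  have h := leibniz_upper (G := fun z => (v t z).1)
    (contDiff_fst.comp (contDiff_slice hv t)) (-1) hfd
  have hcong : Set.EqOn (fun y => fderiv ℝ (fun z => (v t z).1) (a, y) (1, 0))
      (fun y => -(fderiv ℝ (fun z => (v t z).2) (a, y) (0, 1)))
      (Set.uIcc (-1 : ℝ) (ft a)) := by
    intro y hy
    rw [Set.uIcc_of_le hc] at hy
    have hd := hdiv y hy.1 hy.2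
    have e1 := fderiv_fst' hvd (a, y) (1, 0)
    have e2 := fderiv_snd' hvd (a, y) (0, 1)
    simp only [e1, e2]
    linarith
  rw [intervalIntegral.integral_congr hcong, intervalIntegral.integral_neg,
    integral_fderiv2 (φ := fun z => (v t z).2) (by exact contDiff_snd.comp (contDiff_slice hv t)) a (-1) (ft a), hb] at h
  convert h using 1
  ring

lemma upper_field_deriv {v : ℝ → ℝ × ℝ → ℝ × ℝ} (hv : ContDiff ℝ (⊤ : ℕ∞) (Function.uncurry v))
    {ft : ℝ → ℝ} {a fd : ℝ} (hfd : HasDerivAt ft fd a) (t : ℝ) (hc : ft a ≤ (1 : ℝ))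
    (hdiv : ∀ y, ft a ≤ y → y ≤ 1 →
      (fderiv ℝ (v t) (a, y) (1, 0)).1 + (fderiv ℝ (v t) (a, y) (0, 1)).2 = 0)
    (hb : (v t (a, 1)).2 = 0) :
    HasDerivAt (fun s => ∫ y in ft s..(1 : ℝ), (v t (s, y)).1)
      (-(fd * (v t (a, ft a)).1) + (v t (a, ft a)).2) a := by
  have hvd : Differentiable ℝ (v t) := (contDiff_slice hv t).differentiable (by simp)
  have h := leibniz_lower (G := fun z => (v t z).1)
    (contDiff_fst.comp (contDiff_slice hv t)) 1 hfd
  have hcong : Set.EqOn (fun y => fderiv ℝ (fun z => (v t z).1) (a, y) (1, 0))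
      (fun y => -(fderiv ℝ (fun z => (v t z).2) (a, y) (0, 1)))
      (Set.uIcc (ft a) (1 : ℝ)) := by
    intro y hy
    rw [Set.uIcc_of_le hc] at hy
    have hd := hdiv y hy.1 hy.2
    have e1 := fderiv_fst' hvd (a, y) (1, 0)
    have e2 := fderiv_snd' hvd (a, y) (0, 1)
    simp only [e1, e2]
    linarith
  rw [intervalIntegral.integral_congr hcong, intervalIntegral.integral_neg,
    integral_fderiv2 (φ := fun z => (v t z).2) (by exact contDiff_snd.comp (contDiff_slice hv t)) a (ft a) 1, hb] at h
  convert h using 1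
  ring

lemma t_lower_field {v : ℝ → ℝ × ℝ → ℝ × ℝ} (hv : ContDiff ℝ (⊤ : ℕ∞) (Function.uncurry v))
    {b : ℝ → ℝ} {t bt : ℝ} (x₁ : ℝ) (hb : HasDerivAt b bt t) :
    HasDerivAt (fun τ => ∫ y in (-1 : ℝ)..b τ, (v τ (x₁, y)).1)
      (bt * (v t (x₁, b t)).1 + ∫ y in (-1 : ℝ)..b t, (deriv (fun τ => v τ (x₁, y)) t).1) t := by
  have h := leibniz_upper (G := fun sy : ℝ × ℝ => (v sy.1 (x₁, sy.2)).1)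
    (contDiff_param_fst hv x₁) (-1) hb
  have hcong : Set.EqOn
      (fun y => fderiv ℝ (fun sy : ℝ × ℝ => (v sy.1 (x₁, sy.2)).1) (t, y) (1, 0))
      (fun y => (deriv (fun τ => v τ (x₁, y)) t).1) (Set.uIcc (-1 : ℝ) (b t)) :=
    fun y _ => fderiv_param_fst hv x₁ t y
  rw [intervalIntegral.integral_congr hcong] at h
  exact h

lemma t_upper_field {v : ℝ → ℝ × ℝ → ℝ × ℝ} (hv : ContDiff ℝ (⊤ : ℕ∞) (Function.uncurry v))
    {b : ℝ → ℝ} {t bt : ℝ} (x₁ : ℝ) (hb : HasDerivAt b bt t) :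
    HasDerivAt (fun τ => ∫ y in b τ..(1 : ℝ), (v τ (x₁, y)).1)
      (-(bt * (v t (x₁, b t)).1) +
        ∫ y in b t..(1 : ℝ), (deriv (fun τ => v τ (x₁, y)) t).1) t := by
  have h := leibniz_lower (G := fun sy : ℝ × ℝ => (v sy.1 (x₁, sy.2)).1)
    (contDiff_param_fst hv x₁) 1 hb
  have hcong : Set.EqOn
      (fun y => fderiv ℝ (fun sy : ℝ × ℝ => (v sy.1 (x₁, sy.2)).1) (t, y) (1, 0))
      (fun y => (deriv (fun τ => v τ (x₁, y)) t).1) (Set.uIcc (b t) (1 : ℝ)) :=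
    fun y _ => fderiv_param_fst hv x₁ t y
  rw [intervalIntegral.integral_congr hcong] at h
  exact h

lemma fderiv_const_mul_apply {A : ℝ × ℝ → ℝ} (hA : Differentiable ℝ A) (c : ℝ) (z w : ℝ × ℝ) :
    fderiv ℝ (fun z => c * A z) z w = c * fderiv ℝ A z w := by
  rw [fderiv_const_mul (hA z) c]
  simp
noncomputable def auxM (f : ℝ → ℝ → ℝ) (Λp Λm Λhp Λhm : ℝ → ℝ × ℝ → ℝ × ℝ) (t x₁ : ℝ) : ℝ :=
  (∫ y in (-1 : ℝ)..f t x₁, ((Λp t (x₁, y)).1 + (Λm t (x₁, y)).1)) +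
    ∫ y in f t x₁..(1 : ℝ), ((Λhp t (x₁, y)).1 + (Λhm t (x₁, y)).1)

noncomputable def auxF (f : ℝ → ℝ → ℝ) (Λp Λm Λhp Λhm : ℝ → ℝ × ℝ → ℝ × ℝ)
    (p phat : ℝ → ℝ × ℝ → ℝ) (t x₁ : ℝ) : ℝ :=
  (∫ y in (-1 : ℝ)..f t x₁, p t (x₁, y)) +
    (∫ y in f t x₁..(1 : ℝ), phat t (x₁, y)) +
    (∫ y in (-1 : ℝ)..f t x₁, (Λm t (x₁, y)).1 * (Λp t (x₁, y)).1) +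
    ∫ y in f t x₁..(1 : ℝ), (Λhm t (x₁, y)).1 * (Λhp t (x₁, y)).1

/-- a constant function admitting arbitrarily small values is zero -/
lemma zero_of_const_small (g : ℝ → ℝ) (hconst : ∀ a b, g a = g b)
    (hsm : ∀ ε, 0 < ε → ε ≤ 1 → ∃ s, |g s| ≤ 16 * ε) : ∀ s, g s = 0 := by
  intro s
  rcases eq_or_lt_of_le (abs_nonneg (g s)) with h | h
  · exact abs_eq_zero.mp h.symm
  · exfalso
    obtain ⟨s', hs'⟩ := hsm (min (|g s| / 32) 1) (by positivity) (min_le_right _ _)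
    rw [hconst s' s] at hs'
    have hmin : min (|g s| / 32) 1 ≤ |g s| / 32 := min_le_left _ _
    nlinarith

/-- bounding an interval integral inside the strip -/
lemma strip_integral_bound {g : ℝ → ℝ} {aa bb ε : ℝ} (hcont : Continuous g)
    (h1 : (-1 : ℝ) ≤ aa) (h2 : aa ≤ bb) (h3 : bb ≤ 1)
    (hg : ∀ y, aa ≤ y → y ≤ bb → |g y| ≤ 2 * ε) :
    |∫ y in aa..bb, g y| ≤ 4 * ε := by
  have hb := intervalIntegral.norm_integral_le_of_norm_le_const (C := 2 * ε) (f := g)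
    (a := aa) (b := bb) (fun y hy => by
      rw [Set.uIoc_of_le h2] at hy
      rw [Real.norm_eq_abs]
      exact hg y (le_of_lt hy.1) hy.2)
  rw [Real.norm_eq_abs] at hb
  have habs : |bb - aa| ≤ 2 := by rw [abs_le]; constructor <;> linarith
  have hε : 0 ≤ ε := by
    have := hg aa le_rfl h2
    have := abs_nonneg (g aa)
    linarith
  nlinarith
/-- The integral identity for the pressure.  For a smooth solution
`(f, Λ_±, Λ̂_±, p, p̂)` of the 2D ideal incompressible MHD current-vortex sheet system in
(perturbed) Elsässer variables, with all unknowns and their first (spatial) derivatives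
vanishing as `x₁ → +∞` (uniformly in `x₂`), one has for every `t, x₁`:
`∫_{-1}^{f} p dx₂ + ∫_f^1 p̂ dx₂ + ∫_{-1}^f Λ₋¹Λ₊¹ dx₂ + ∫_f^1 Λ̂₋¹Λ̂₊¹ dx₂ = 0`. -/
theorem pressure_integral_identity
    (f : ℝ → ℝ → ℝ) (Λp Λm Λhp Λhm : ℝ → ℝ × ℝ → ℝ × ℝ) (p phat : ℝ → ℝ × ℝ → ℝ)
    -- smoothness of all unknowns
    (hf : ContDiff ℝ (⊤ : ℕ∞) (Function.uncurry f))
    (hΛp : ContDiff ℝ (⊤ : ℕ∞) (Function.uncurry Λp)) (hΛm : ContDiff ℝ (⊤ : ℕ∞) (Function.uncurry Λm))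
    (hΛhp : ContDiff ℝ (⊤ : ℕ∞) (Function.uncurry Λhp))
    (hΛhm : ContDiff ℝ (⊤ : ℕ∞) (Function.uncurry Λhm))
    (hp : ContDiff ℝ (⊤ : ℕ∞) (Function.uncurry p)) (hphat : ContDiff ℝ (⊤ : ℕ∞) (Function.uncurry phat))
    -- the graph stays strictly inside the strip
    (hfamp : ∀ t x₁, -1 < f t x₁ ∧ f t x₁ < 1)
    -- Elsässer equations in the lower region Ω_f (up to the interface)
    (heqp : ∀ t x, -1 ≤ x.2 → x.2 ≤ f t x.1 →
      deriv (fun τ => Λp τ x) t - fderiv ℝ (Λp t) x (1, 0) +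
          convDeriv (Λm t x) (Λp t) x + grad2 (p t) x = 0)
    (heqm : ∀ t x, -1 ≤ x.2 → x.2 ≤ f t x.1 →
      deriv (fun τ => Λm τ x) t + fderiv ℝ (Λm t) x (1, 0) +
          convDeriv (Λp t x) (Λm t) x + grad2 (p t) x = 0)
    (hdivL : ∀ t x, -1 ≤ x.2 → x.2 ≤ f t x.1 → div2 (Λp t) x = 0 ∧ div2 (Λm t) x = 0)
    -- Elsässer equations in the upper region Ω̂_f (down to the interface)
    (heqhp : ∀ t x, f t x.1 ≤ x.2 → x.2 ≤ 1 →
      deriv (fun τ => Λhp τ x) t - fderiv ℝ (Λhp t) x (1, 0) +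
          convDeriv (Λhm t x) (Λhp t) x + grad2 (phat t) x = 0)
    (heqhm : ∀ t x, f t x.1 ≤ x.2 → x.2 ≤ 1 →
      deriv (fun τ => Λhm τ x) t + fderiv ℝ (Λhm t) x (1, 0) +
          convDeriv (Λhp t x) (Λhm t) x + grad2 (phat t) x = 0)
    (hdivU : ∀ t x, f t x.1 ≤ x.2 → x.2 ≤ 1 → div2 (Λhp t) x = 0 ∧ div2 (Λhm t) x = 0)
    -- kinematic boundary conditions on the interface
    (hkinp : ∀ t x₁, deriv (fun τ => f τ x₁) t + deriv (f t) x₁ =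
        dot2 (Λp t (x₁, f t x₁)) (Nf f t x₁) ∧
      deriv (fun τ => f τ x₁) t + deriv (f t) x₁ =
        dot2 (Λhp t (x₁, f t x₁)) (Nf f t x₁))
    (hkinm : ∀ t x₁, deriv (fun τ => f τ x₁) t - deriv (f t) x₁ =
        dot2 (Λm t (x₁, f t x₁)) (Nf f t x₁) ∧
      deriv (fun τ => f τ x₁) t - deriv (f t) x₁ =
        dot2 (Λhm t (x₁, f t x₁)) (Nf f t x₁))
    -- continuity of the pressure across the interface
    (hpress : ∀ t x₁, p t (x₁, f t x₁) = phat t (x₁, f t x₁))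
    -- conditions on the fixed boundaries
    (hbot : ∀ t x₁, (Λp t (x₁, -1)).2 = 0 ∧ (Λm t (x₁, -1)).2 = 0)
    (htop : ∀ t x₁, (Λhp t (x₁, 1)).2 = 0 ∧ (Λhm t (x₁, 1)).2 = 0)
    -- decay of all unknowns and their first derivatives as x₁ → +∞
    (hdecay : ∀ t : ℝ, ∀ ε > (0 : ℝ), ∃ R : ℝ, ∀ x₁ ≥ R, ∀ x₂ ∈ Set.Icc (-1 : ℝ) 1,
      |p t (x₁, x₂)| ≤ ε ∧ |phat t (x₁, x₂)| ≤ ε ∧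
      ‖Λp t (x₁, x₂)‖ ≤ ε ∧ ‖Λm t (x₁, x₂)‖ ≤ ε ∧
      ‖Λhp t (x₁, x₂)‖ ≤ ε ∧ ‖Λhm t (x₁, x₂)‖ ≤ ε ∧
      ‖fderiv ℝ (p t) (x₁, x₂)‖ ≤ ε ∧ ‖fderiv ℝ (phat t) (x₁, x₂)‖ ≤ ε ∧
      ‖fderiv ℝ (Λp t) (x₁, x₂)‖ ≤ ε ∧ ‖fderiv ℝ (Λm t) (x₁, x₂)‖ ≤ ε ∧
      ‖fderiv ℝ (Λhp t) (x₁, x₂)‖ ≤ ε ∧ ‖fderiv ℝ (Λhm t) (x₁, x₂)‖ ≤ ε) :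
    ∀ t x₁ : ℝ,
      (∫ y in Set.Ioo (-1 : ℝ) (f t x₁), p t (x₁, y)) +
        (∫ y in Set.Ioo (f t x₁) (1 : ℝ), phat t (x₁, y)) +
        (∫ y in Set.Ioo (-1 : ℝ) (f t x₁), (Λm t (x₁, y)).1 * (Λp t (x₁, y)).1) +
        (∫ y in Set.Ioo (f t x₁) (1 : ℝ), (Λhm t (x₁, y)).1 * (Λhp t (x₁, y)).1) = 0 := by
  intro t x₁
  classical
  -- slice smoothness
  have sΛp : ∀ τ, ContDiff ℝ (⊤ : ℕ∞) (Λp τ) := fun τ => contDiff_slice hΛp τ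
  have sΛm : ∀ τ, ContDiff ℝ (⊤ : ℕ∞) (Λm τ) := fun τ => contDiff_slice hΛm τ
  have sΛhp : ∀ τ, ContDiff ℝ (⊤ : ℕ∞) (Λhp τ) := fun τ => contDiff_slice hΛhp τ
  have sΛhm : ∀ τ, ContDiff ℝ (⊤ : ℕ∞) (Λhm τ) := fun τ => contDiff_slice hΛhm τ
  have spp : ∀ τ, ContDiff ℝ (⊤ : ℕ∞) (p τ) := fun τ => contDiff_slice hp τ
  have sph : ∀ τ, ContDiff ℝ (⊤ : ℕ∞) (phat τ) := fun τ => contDiff_slice hphat τ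
  have dΛp : ∀ τ, Differentiable ℝ (Λp τ) := fun τ => (sΛp τ).differentiable (by simp)
  have dΛm : ∀ τ, Differentiable ℝ (Λm τ) := fun τ => (sΛm τ).differentiable (by simp)
  have dΛhp : ∀ τ, Differentiable ℝ (Λhp τ) := fun τ => (sΛhp τ).differentiable (by simp)
  have dΛhm : ∀ τ, Differentiable ℝ (Λhm τ) := fun τ => (sΛhm τ).differentiable (by simp)
  have hfda : ∀ τ s, HasDerivAt (f τ) (deriv (f τ) s) s := fun τ s => by
    have : Differentiable ℝ (f τ) := by
      exact (hf.comp (contDiff_const.prodMk contDiff_id)).differentiable (by simp)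
    exact (this s).hasDerivAt
  have hftd : ∀ s τ, HasDerivAt (fun τ' => f τ' s) (deriv (fun τ' => f τ' s) τ) τ := fun s τ => by
    have : Differentiable ℝ (fun τ' => f τ' s) := by
      exact (hf.differentiable (by simp)).comp (differentiable_id.prodMk (differentiable_const s))
    exact (this τ).hasDerivAt
  -- kinematic conditions in scalar form
  have kA : ∀ τ s, deriv (fun τ' => f τ' s) τ + deriv (f τ) s
      = -(deriv (f τ) s) * (Λp τ (s, f τ s)).1 + (Λp τ (s, f τ s)).2 := fun τ s => by
    have h := (hkinp τ s).1
    simp only [dot2, Nf] at h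
    linear_combination h
  have kAh : ∀ τ s, deriv (fun τ' => f τ' s) τ + deriv (f τ) s
      = -(deriv (f τ) s) * (Λhp τ (s, f τ s)).1 + (Λhp τ (s, f τ s)).2 := fun τ s => by
    have h := (hkinp τ s).2
    simp only [dot2, Nf] at h
    linear_combination h
  have kC : ∀ τ s, deriv (fun τ' => f τ' s) τ - deriv (f τ) s
      = -(deriv (f τ) s) * (Λm τ (s, f τ s)).1 + (Λm τ (s, f τ s)).2 := fun τ s => by
    have h := (hkinm τ s).1
    simp only [dot2, Nf] at h
    linear_combination h
  have kCh : ∀ τ s, deriv (fun τ' => f τ' s) τ - deriv (f τ) s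
      = -(deriv (f τ) s) * (Λhm τ (s, f τ s)).1 + (Λhm τ (s, f τ s)).2 := fun τ s => by
    have h := (hkinm τ s).2
    simp only [dot2, Nf] at h
    linear_combination h
  -- divergence conditions in scalar form
  have divp : ∀ τ s y, -1 ≤ y → y ≤ f τ s →
      (fderiv ℝ (Λp τ) (s, y) (1, 0)).1 + (fderiv ℝ (Λp τ) (s, y) (0, 1)).2 = 0 :=
    fun τ s y h1 h2 => by simpa [div2] using (hdivL τ (s, y) h1 h2).1
  have divm : ∀ τ s y, -1 ≤ y → y ≤ f τ s →
      (fderiv ℝ (Λm τ) (s, y) (1, 0)).1 + (fderiv ℝ (Λm τ) (s, y) (0, 1)).2 = 0 :=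
    fun τ s y h1 h2 => by simpa [div2] using (hdivL τ (s, y) h1 h2).2
  have divhp : ∀ τ s y, f τ s ≤ y → y ≤ 1 →
      (fderiv ℝ (Λhp τ) (s, y) (1, 0)).1 + (fderiv ℝ (Λhp τ) (s, y) (0, 1)).2 = 0 :=
    fun τ s y h1 h2 => by simpa [div2] using (hdivU τ (s, y) h1 h2).1
  have divhm : ∀ τ s y, f τ s ≤ y → y ≤ 1 →
      (fderiv ℝ (Λhm τ) (s, y) (1, 0)).1 + (fderiv ℝ (Λhm τ) (s, y) (0, 1)).2 = 0 :=
    fun τ s y h1 h2 => by simpa [div2] using (hdivU τ (s, y) h1 h2).2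
  -- first components of the momentum equations
  have Ep1 : ∀ τ s y, -1 ≤ y → y ≤ f τ s →
      (deriv (fun τ' => Λp τ' (s, y)) τ).1 - (fderiv ℝ (Λp τ) (s, y) (1, 0)).1 +
        ((Λm τ (s, y)).1 * (fderiv ℝ (Λp τ) (s, y) (1, 0)).1 +
          (Λm τ (s, y)).2 * (fderiv ℝ (Λp τ) (s, y) (0, 1)).1) +
        fderiv ℝ (p τ) (s, y) (1, 0) = 0 := by
    intro τ s y h1 h2
    have h := congrArg Prod.fst (heqp τ (s, y) h1 h2)
    simp only [convDeriv, grad2, Prod.fst_add, Prod.fst_sub, Prod.smul_fst, smul_eq_mul,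
      Prod.fst_zero] at h
    linear_combination h
  have Em1 : ∀ τ s y, -1 ≤ y → y ≤ f τ s →
      (deriv (fun τ' => Λm τ' (s, y)) τ).1 + (fderiv ℝ (Λm τ) (s, y) (1, 0)).1 +
        ((Λp τ (s, y)).1 * (fderiv ℝ (Λm τ) (s, y) (1, 0)).1 +
          (Λp τ (s, y)).2 * (fderiv ℝ (Λm τ) (s, y) (0, 1)).1) +
        fderiv ℝ (p τ) (s, y) (1, 0) = 0 := by
    intro τ s y h1 h2
    have h := congrArg Prod.fst (heqm τ (s, y) h1 h2)
    simp only [convDeriv, grad2, Prod.fst_add, Prod.fst_sub, Prod.smul_fst, smul_eq_mul,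
      Prod.fst_zero] at h
    linear_combination h
  have Ehp1 : ∀ τ s y, f τ s ≤ y → y ≤ 1 →
      (deriv (fun τ' => Λhp τ' (s, y)) τ).1 - (fderiv ℝ (Λhp τ) (s, y) (1, 0)).1 +
        ((Λhm τ (s, y)).1 * (fderiv ℝ (Λhp τ) (s, y) (1, 0)).1 +
          (Λhm τ (s, y)).2 * (fderiv ℝ (Λhp τ) (s, y) (0, 1)).1) +
        fderiv ℝ (phat τ) (s, y) (1, 0) = 0 := by
    intro τ s y h1 h2
    have h := congrArg Prod.fst (heqhp τ (s, y) h1 h2)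
    simp only [convDeriv, grad2, Prod.fst_add, Prod.fst_sub, Prod.smul_fst, smul_eq_mul,
      Prod.fst_zero] at h
    linear_combination h
  have Ehm1 : ∀ τ s y, f τ s ≤ y → y ≤ 1 →
      (deriv (fun τ' => Λhm τ' (s, y)) τ).1 + (fderiv ℝ (Λhm τ) (s, y) (1, 0)).1 +
        ((Λhp τ (s, y)).1 * (fderiv ℝ (Λhm τ) (s, y) (1, 0)).1 +
          (Λhp τ (s, y)).2 * (fderiv ℝ (Λhm τ) (s, y) (0, 1)).1) +
        fderiv ℝ (phat τ) (s, y) (1, 0) = 0 := by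
    intro τ s y h1 h2
    have h := congrArg Prod.fst (heqhm τ (s, y) h1 h2)
    simp only [convDeriv, grad2, Prod.fst_add, Prod.fst_sub, Prod.smul_fst, smul_eq_mul,
      Prod.fst_zero] at h
    linear_combination h
  -- splitting of the auxiliary function M
  have hsplitM : ∀ τ s, auxM f Λp Λm Λhp Λhm τ s =
      ((∫ y in (-1:ℝ)..f τ s, (Λp τ (s, y)).1) + ∫ y in (-1:ℝ)..f τ s, (Λm τ (s, y)).1) +
      ((∫ y in f τ s..(1:ℝ), (Λhp τ (s, y)).1) + ∫ y in f τ s..(1:ℝ), (Λhm τ (s, y)).1) := by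
    intro τ s
    unfold auxM
    rw [intervalIntegral.integral_add ((cont_field1 hΛp τ s).intervalIntegrable _ _)
      ((cont_field1 hΛm τ s).intervalIntegrable _ _),
      intervalIntegral.integral_add ((cont_field1 hΛhp τ s).intervalIntegrable _ _)
      ((cont_field1 hΛhm τ s).intervalIntegrable _ _)]
  -- M is constant in x₁
  have hMx : ∀ τ s, HasDerivAt (auxM f Λp Λm Λhp Λhm τ) 0 s := by
    intro τ s
    have hc1 : (-1:ℝ) ≤ f τ s := le_of_lt (hfamp τ s).1
    have hc2 : f τ s ≤ 1 := le_of_lt (hfamp τ s).2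
    have l1 := lower_field_deriv hΛp (hfda τ s) τ hc1 (divp τ s) (hbot τ s).1
    have l2 := lower_field_deriv hΛm (hfda τ s) τ hc1 (divm τ s) (hbot τ s).2
    have u1 := upper_field_deriv hΛhp (hfda τ s) τ hc2 (divhp τ s) (htop τ s).1
    have u2 := upper_field_deriv hΛhm (hfda τ s) τ hc2 (divhm τ s) (htop τ s).2
    have hfun : auxM f Λp Λm Λhp Λhm τ = fun s' =>
        ((∫ y in (-1:ℝ)..f τ s', (Λp τ (s', y)).1) + ∫ y in (-1:ℝ)..f τ s', (Λm τ (s', y)).1) +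
        ((∫ y in f τ s'..(1:ℝ), (Λhp τ (s', y)).1) + ∫ y in f τ s'..(1:ℝ), (Λhm τ (s', y)).1) :=
      funext fun s' => hsplitM τ s'
    rw [hfun]
    have hsum := (l1.fun_add l2).fun_add (u1.fun_add u2)
    refine hsum.congr_deriv ?_
    have h1 := kA τ s; have h2 := kC τ s; have h3 := kAh τ s; have h4 := kCh τ s
    linarith
  -- M vanishes identically
  have hM0 : ∀ τ s, auxM f Λp Λm Λhp Λhm τ s = 0 := by
    intro τ
    apply zero_of_const_small
    · exact fun a b => is_const_of_deriv_eq_zero (fun x => (hMx τ x).differentiableAt)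
        (fun x => (hMx τ x).deriv) a b
    · intro ε hε hε1
      obtain ⟨R, hR⟩ := hdecay τ ε hε
      refine ⟨R, ?_⟩
      have hc1 : (-1:ℝ) ≤ f τ R := le_of_lt (hfamp τ R).1
      have hc2 : f τ R ≤ 1 := le_of_lt (hfamp τ R).2
      have b1 : |∫ y in (-1:ℝ)..f τ R, ((Λp τ (R, y)).1 + (Λm τ (R, y)).1)| ≤ 4 * ε := by
        apply strip_integral_bound ((cont_field1 hΛp τ R).add (cont_field1 hΛm τ R)) le_rfl hc1 hc2
        intro y hy1 hy2
        obtain ⟨w1, w2, w3, w4, w5, w6, -⟩ := hR R le_rfl y ⟨hy1, by linarith⟩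
        have e1 : |(Λp τ (R, y)).1| ≤ ε := le_trans (by rw [← Real.norm_eq_abs]; exact norm_fst_le _) w3
        have e2 : |(Λm τ (R, y)).1| ≤ ε := le_trans (by rw [← Real.norm_eq_abs]; exact norm_fst_le _) w4
        calc |(Λp τ (R, y)).1 + (Λm τ (R, y)).1| ≤ |(Λp τ (R, y)).1| + |(Λm τ (R, y)).1| := abs_add_le _ _
          _ ≤ 2 * ε := by linarith
      have b2 : |∫ y in f τ R..(1:ℝ), ((Λhp τ (R, y)).1 + (Λhm τ (R, y)).1)| ≤ 4 * ε := by
        apply strip_integral_bound ((cont_field1 hΛhp τ R).add (cont_field1 hΛhm τ R)) hc1 hc2 le_rfl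
        intro y hy1 hy2
        obtain ⟨w1, w2, w3, w4, w5, w6, -⟩ := hR R le_rfl y ⟨by linarith, hy2⟩
        have e1 : |(Λhp τ (R, y)).1| ≤ ε := le_trans (by rw [← Real.norm_eq_abs]; exact norm_fst_le _) w5
        have e2 : |(Λhm τ (R, y)).1| ≤ ε := le_trans (by rw [← Real.norm_eq_abs]; exact norm_fst_le _) w6
        calc |(Λhp τ (R, y)).1 + (Λhm τ (R, y)).1| ≤ |(Λhp τ (R, y)).1| + |(Λhm τ (R, y)).1| := abs_add_le _ _
          _ ≤ 2 * ε := by linarith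
      have : auxM f Λp Λm Λhp Λhm τ R = (∫ y in (-1:ℝ)..f τ R, ((Λp τ (R, y)).1 + (Λm τ (R, y)).1)) +
          ∫ y in f τ R..(1:ℝ), ((Λhp τ (R, y)).1 + (Λhm τ (R, y)).1) := rfl
      rw [this]
      have hε0 : 0 ≤ ε := le_of_lt hε
      calc |(∫ y in (-1:ℝ)..f τ R, ((Λp τ (R, y)).1 + (Λm τ (R, y)).1)) +
          ∫ y in f τ R..(1:ℝ), ((Λhp τ (R, y)).1 + (Λhm τ (R, y)).1)| ≤ _ := abs_add_le _ _
        _ ≤ 16 * ε := by linarith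
  -- the star identity: integral of the time derivatives
  have hstar : ∀ s,
      (∫ y in (-1:ℝ)..f t s, (deriv (fun τ => Λp τ (s, y)) t).1) +
      (∫ y in (-1:ℝ)..f t s, (deriv (fun τ => Λm τ (s, y)) t).1) +
      ((∫ y in f t s..(1:ℝ), (deriv (fun τ => Λhp τ (s, y)) t).1) +
       (∫ y in f t s..(1:ℝ), (deriv (fun τ => Λhm τ (s, y)) t).1)) =
      -(deriv (fun τ => f τ s) t * ((Λp t (s, f t s)).1 + (Λm t (s, f t s)).1)) +
        deriv (fun τ => f τ s) t * ((Λhp t (s, f t s)).1 + (Λhm t (s, f t s)).1) := by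
    intro s
    have t1 := t_lower_field hΛp s (hftd s t)
    have t2 := t_lower_field hΛm s (hftd s t)
    have t3 := t_upper_field hΛhp s (hftd s t)
    have t4 := t_upper_field hΛhm s (hftd s t)
    have hsum := (t1.fun_add t2).fun_add (t3.fun_add t4)
    have hfun : (fun τ => ((∫ y in (-1:ℝ)..f τ s, (Λp τ (s, y)).1) +
          ∫ y in (-1:ℝ)..f τ s, (Λm τ (s, y)).1) +
        ((∫ y in f τ s..(1:ℝ), (Λhp τ (s, y)).1) + ∫ y in f τ s..(1:ℝ), (Λhm τ (s, y)).1)) =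
        fun _ => (0:ℝ) := by
      funext τ
      rw [← hsplitM τ s]
      exact hM0 τ s
    rw [hfun] at hsum
    have h0 := hsum.unique (hasDerivAt_const t 0)
    linarith [h0]
  -- derivative of F in x₁ vanishes
  have hFx : ∀ s, HasDerivAt (auxF f Λp Λm Λhp Λhm p phat t) 0 s := by
    intro s
    have hc1 : (-1:ℝ) ≤ f t s := le_of_lt (hfamp t s).1
    have hc2 : f t s ≤ 1 := le_of_lt (hfamp t s).2
    have hGq : ContDiff ℝ (⊤ : ℕ∞) (fun z => (Λm t z).1 * (Λp t z).1) :=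
      (contDiff_fst.comp (sΛm t)).mul (contDiff_fst.comp (sΛp t))
    have hGqh : ContDiff ℝ (⊤ : ℕ∞) (fun z => (Λhm t z).1 * (Λhp t z).1) :=
      (contDiff_fst.comp (sΛhm t)).mul (contDiff_fst.comp (sΛhp t))
    have hPlow := leibniz_upper (G := p t) (spp t) (-1) (hfda t s)
    have hPup := leibniz_lower (G := phat t) (sph t) 1 (hfda t s)
    have hQlow := leibniz_upper (G := fun z => (Λm t z).1 * (Λp t z).1) hGq (-1) (hfda t s)
    have hQup := leibniz_lower (G := fun z => (Λhm t z).1 * (Λhp t z).1) hGqh 1 (hfda t s)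
    have hsum := ((hPlow.fun_add hPup).fun_add hQlow).fun_add hQup
    -- the key integral computation in the lower region
    have dA1 : Differentiable ℝ (fun z => (Λp t z).1) := (dΛp t).fst
    have dA2 : Differentiable ℝ (fun z => (Λp t z).2) := (dΛp t).snd
    have dC1 : Differentiable ℝ (fun z => (Λm t z).1) := (dΛm t).fst
    have dC2 : Differentiable ℝ (fun z => (Λm t z).2) := (dΛm t).snd
    have dAh1 : Differentiable ℝ (fun z => (Λhp t z).1) := (dΛhp t).fst
    have dAh2 : Differentiable ℝ (fun z => (Λhp t z).2) := (dΛhp t).snd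
    have dCh1 : Differentiable ℝ (fun z => (Λhm t z).1) := (dΛhm t).fst
    have dCh2 : Differentiable ℝ (fun z => (Λhm t z).2) := (dΛhm t).snd
    have hJlow :
        (∫ y in (-1:ℝ)..f t s, fderiv ℝ (p t) (s, y) (1, 0)) +
        (∫ y in (-1:ℝ)..f t s, fderiv ℝ (fun z => (Λm t z).1 * (Λp t z).1) (s, y) (1, 0)) =
        -(1/2) * (∫ y in (-1:ℝ)..f t s, (deriv (fun τ => Λp τ (s, y)) t).1) +
        (-(1/2) * (∫ y in (-1:ℝ)..f t s, (deriv (fun τ => Λm τ (s, y)) t).1) +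
        (-(1/2) * (Λp t (s, f t s)).2 + ((1/2) * (Λm t (s, f t s)).2 +
          -(1/2) * ((Λm t (s, f t s)).2 * (Λp t (s, f t s)).1 +
            (Λp t (s, f t s)).2 * (Λm t (s, f t s)).1)))) := by
      set Φ : ℝ × ℝ → ℝ := fun z => -(1/2) * (Λp t z).2 + ((1/2) * (Λm t z).2 +
        -(1/2) * ((Λm t z).2 * (Λp t z).1 + (Λp t z).2 * (Λm t z).1)) with hΦdef
      have hΦ : ContDiff ℝ (⊤ : ℕ∞) Φ := by
        apply ContDiff.add
        · exact contDiff_const.mul (contDiff_snd.comp (sΛp t))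
        · apply ContDiff.add
          · exact contDiff_const.mul (contDiff_snd.comp (sΛm t))
          · exact contDiff_const.mul
              (((contDiff_snd.comp (sΛm t)).mul (contDiff_fst.comp (sΛp t))).add
                ((contDiff_snd.comp (sΛp t)).mul (contDiff_fst.comp (sΛm t))))
      have hint1 : IntervalIntegrable (fun y => fderiv ℝ (p t) (s, y) (1, 0))
          volume (-1) (f t s) := (cont_fderiv_dir (spp t) s (1, 0)).intervalIntegrable _ _
      have hint2 : IntervalIntegrable
          (fun y => fderiv ℝ (fun z => (Λm t z).1 * (Λp t z).1) (s, y) (1, 0))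
          volume (-1) (f t s) := (cont_fderiv_dir hGq s (1, 0)).intervalIntegrable _ _
      rw [← intervalIntegral.integral_add hint1 hint2]
      have hcong : Set.EqOn
          (fun y => fderiv ℝ (p t) (s, y) (1, 0) +
            fderiv ℝ (fun z => (Λm t z).1 * (Λp t z).1) (s, y) (1, 0))
          (fun y => -(1/2) * (deriv (fun τ => Λp τ (s, y)) t).1 +
            (-(1/2) * (deriv (fun τ => Λm τ (s, y)) t).1 + fderiv ℝ Φ (s, y) (0, 1)))
          (Set.uIcc (-1:ℝ) (f t s)) := by
        intro y hy
        rw [Set.uIcc_of_le hc1] at hy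
        have e1 : fderiv ℝ (fun z => (Λm t z).1 * (Λp t z).1) (s, y) (1, 0) =
            (fderiv ℝ (Λm t) (s, y) (1, 0)).1 * (Λp t (s, y)).1 +
              (Λm t (s, y)).1 * (fderiv ℝ (Λp t) (s, y) (1, 0)).1 := by
          rw [fderiv_mul_apply dC1 dA1 (s, y) (1, 0), fderiv_fst' (dΛm t), fderiv_fst' (dΛp t)]
        have e2 : fderiv ℝ Φ (s, y) (0, 1) =
            -(1/2) * (fderiv ℝ (Λp t) (s, y) (0, 1)).2 +
            ((1/2) * (fderiv ℝ (Λm t) (s, y) (0, 1)).2 +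
             -(1/2) * (((fderiv ℝ (Λm t) (s, y) (0, 1)).2 * (Λp t (s, y)).1 +
                 (Λm t (s, y)).2 * (fderiv ℝ (Λp t) (s, y) (0, 1)).1) +
               ((fderiv ℝ (Λp t) (s, y) (0, 1)).2 * (Λm t (s, y)).1 +
                 (Λp t (s, y)).2 * (fderiv ℝ (Λm t) (s, y) (0, 1)).1))) := by
          rw [hΦdef]
          rw [fderiv_add_apply (dA2.const_mul _)
              ((dC2.const_mul _).fun_add (((dC2.fun_mul dA1).fun_add (dA2.fun_mul dC1)).const_mul _)),
            fderiv_add_apply (dC2.const_mul _) (((dC2.fun_mul dA1).fun_add (dA2.fun_mul dC1)).const_mul _),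
            fderiv_const_mul_apply dA2, fderiv_const_mul_apply dC2,
            fderiv_const_mul_apply ((dC2.fun_mul dA1).fun_add (dA2.fun_mul dC1)),
            fderiv_add_apply (dC2.fun_mul dA1) (dA2.fun_mul dC1),
            fderiv_mul_apply dC2 dA1, fderiv_mul_apply dA2 dC1,
            fderiv_snd' (dΛp t), fderiv_snd' (dΛm t), fderiv_fst' (dΛp t), fderiv_fst' (dΛm t)]
        have hEp := Ep1 t s y hy.1 hy.2
        have hEm := Em1 t s y hy.1 hy.2
        have hdp := divp t s y hy.1 hy.2
        have hdm := divm t s y hy.1 hy.2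
        simp only [e1, e2]
        linear_combination (1/2) * hEp + (1/2) * hEm + (1/2) * (1 + (Λm t (s, y)).1) * hdp +
          (1/2) * ((Λp t (s, y)).1 - 1) * hdm
      rw [intervalIntegral.integral_congr hcong]
      have hIa : IntervalIntegrable (fun y => -(1/2) * (deriv (fun τ => Λp τ (s, y)) t).1)
          volume (-1) (f t s) :=
        (continuous_const.mul (cont_time_deriv_fst hΛp s t)).intervalIntegrable _ _
      have hIb : IntervalIntegrable (fun y => -(1/2) * (deriv (fun τ => Λm τ (s, y)) t).1)
          volume (-1) (f t s) :=
        (continuous_const.mul (cont_time_deriv_fst hΛm s t)).intervalIntegrable _ _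
      have hIc : IntervalIntegrable (fun y => fderiv ℝ Φ (s, y) (0, 1)) volume (-1) (f t s) :=
        (cont_fderiv_dir hΦ s (0, 1)).intervalIntegrable _ _
      rw [intervalIntegral.integral_add hIa (hIb.add hIc), intervalIntegral.integral_add hIb hIc,
        intervalIntegral.integral_const_mul, intervalIntegral.integral_const_mul,
        integral_fderiv2 hΦ s (-1) (f t s)]
      have hb1 := (hbot t s).1
      have hb2 := (hbot t s).2
      simp only [hΦdef]
      rw [hb1, hb2]
      ring
    have hJup :
        (∫ y in f t s..(1:ℝ), fderiv ℝ (phat t) (s, y) (1, 0)) +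
        (∫ y in f t s..(1:ℝ), fderiv ℝ (fun z => (Λhm t z).1 * (Λhp t z).1) (s, y) (1, 0)) =
        -(1/2) * (∫ y in f t s..(1:ℝ), (deriv (fun τ => Λhp τ (s, y)) t).1) +
        (-(1/2) * (∫ y in f t s..(1:ℝ), (deriv (fun τ => Λhm τ (s, y)) t).1) +
        ((1/2) * (Λhp t (s, f t s)).2 + (-(1/2) * (Λhm t (s, f t s)).2 +
          (1/2) * ((Λhm t (s, f t s)).2 * (Λhp t (s, f t s)).1 +
            (Λhp t (s, f t s)).2 * (Λhm t (s, f t s)).1)))) := by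
      set Φ : ℝ × ℝ → ℝ := fun z => -(1/2) * (Λhp t z).2 + ((1/2) * (Λhm t z).2 +
        -(1/2) * ((Λhm t z).2 * (Λhp t z).1 + (Λhp t z).2 * (Λhm t z).1)) with hΦdef
      have hΦ : ContDiff ℝ (⊤ : ℕ∞) Φ := by
        apply ContDiff.add
        · exact contDiff_const.mul (contDiff_snd.comp (sΛhp t))
        · apply ContDiff.add
          · exact contDiff_const.mul (contDiff_snd.comp (sΛhm t))
          · exact contDiff_const.mul
              (((contDiff_snd.comp (sΛhm t)).mul (contDiff_fst.comp (sΛhp t))).add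
                ((contDiff_snd.comp (sΛhp t)).mul (contDiff_fst.comp (sΛhm t))))
      have hint1 : IntervalIntegrable (fun y => fderiv ℝ (phat t) (s, y) (1, 0))
          volume (f t s) 1 := (cont_fderiv_dir (sph t) s (1, 0)).intervalIntegrable _ _
      have hint2 : IntervalIntegrable
          (fun y => fderiv ℝ (fun z => (Λhm t z).1 * (Λhp t z).1) (s, y) (1, 0))
          volume (f t s) 1 := (cont_fderiv_dir hGqh s (1, 0)).intervalIntegrable _ _
      rw [← intervalIntegral.integral_add hint1 hint2]
      have hcong : Set.EqOn
          (fun y => fderiv ℝ (phat t) (s, y) (1, 0) +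
            fderiv ℝ (fun z => (Λhm t z).1 * (Λhp t z).1) (s, y) (1, 0))
          (fun y => -(1/2) * (deriv (fun τ => Λhp τ (s, y)) t).1 +
            (-(1/2) * (deriv (fun τ => Λhm τ (s, y)) t).1 + fderiv ℝ Φ (s, y) (0, 1)))
          (Set.uIcc (f t s) (1:ℝ)) := by
        intro y hy
        rw [Set.uIcc_of_le hc2] at hy
        have e1 : fderiv ℝ (fun z => (Λhm t z).1 * (Λhp t z).1) (s, y) (1, 0) =
            (fderiv ℝ (Λhm t) (s, y) (1, 0)).1 * (Λhp t (s, y)).1 +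
              (Λhm t (s, y)).1 * (fderiv ℝ (Λhp t) (s, y) (1, 0)).1 := by
          rw [fderiv_mul_apply dCh1 dAh1 (s, y) (1, 0), fderiv_fst' (dΛhm t), fderiv_fst' (dΛhp t)]
        have e2 : fderiv ℝ Φ (s, y) (0, 1) =
            -(1/2) * (fderiv ℝ (Λhp t) (s, y) (0, 1)).2 +
            ((1/2) * (fderiv ℝ (Λhm t) (s, y) (0, 1)).2 +
             -(1/2) * (((fderiv ℝ (Λhm t) (s, y) (0, 1)).2 * (Λhp t (s, y)).1 +
                 (Λhm t (s, y)).2 * (fderiv ℝ (Λhp t) (s, y) (0, 1)).1) +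
               ((fderiv ℝ (Λhp t) (s, y) (0, 1)).2 * (Λhm t (s, y)).1 +
                 (Λhp t (s, y)).2 * (fderiv ℝ (Λhm t) (s, y) (0, 1)).1))) := by
          rw [hΦdef]
          rw [fderiv_add_apply (dAh2.const_mul _)
              ((dCh2.const_mul _).fun_add (((dCh2.fun_mul dAh1).fun_add (dAh2.fun_mul dCh1)).const_mul _)),
            fderiv_add_apply (dCh2.const_mul _) (((dCh2.fun_mul dAh1).fun_add (dAh2.fun_mul dCh1)).const_mul _),
            fderiv_const_mul_apply dAh2, fderiv_const_mul_apply dCh2,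
            fderiv_const_mul_apply ((dCh2.fun_mul dAh1).fun_add (dAh2.fun_mul dCh1)),
            fderiv_add_apply (dCh2.fun_mul dAh1) (dAh2.fun_mul dCh1),
            fderiv_mul_apply dCh2 dAh1, fderiv_mul_apply dAh2 dCh1,
            fderiv_snd' (dΛhp t), fderiv_snd' (dΛhm t), fderiv_fst' (dΛhp t), fderiv_fst' (dΛhm t)]
        have hEp := Ehp1 t s y hy.1 hy.2
        have hEm := Ehm1 t s y hy.1 hy.2
        have hdp := divhp t s y hy.1 hy.2
        have hdm := divhm t s y hy.1 hy.2
        simp only [e1, e2]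
        linear_combination (1/2) * hEp + (1/2) * hEm + (1/2) * (1 + (Λhm t (s, y)).1) * hdp +
          (1/2) * ((Λhp t (s, y)).1 - 1) * hdm
      rw [intervalIntegral.integral_congr hcong]
      have hIa : IntervalIntegrable (fun y => -(1/2) * (deriv (fun τ => Λhp τ (s, y)) t).1)
          volume (f t s) 1 :=
        (continuous_const.mul (cont_time_deriv_fst hΛhp s t)).intervalIntegrable _ _
      have hIb : IntervalIntegrable (fun y => -(1/2) * (deriv (fun τ => Λhm τ (s, y)) t).1)
          volume (f t s) 1 :=
        (continuous_const.mul (cont_time_deriv_fst hΛhm s t)).intervalIntegrable _ _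
      have hIc : IntervalIntegrable (fun y => fderiv ℝ Φ (s, y) (0, 1)) volume (f t s) 1 :=
        (cont_fderiv_dir hΦ s (0, 1)).intervalIntegrable _ _
      rw [intervalIntegral.integral_add hIa (hIb.add hIc), intervalIntegral.integral_add hIb hIc,
        intervalIntegral.integral_const_mul, intervalIntegral.integral_const_mul,
        integral_fderiv2 hΦ s (f t s) 1]
      have hb1 := (htop t s).1
      have hb2 := (htop t s).2
      simp only [hΦdef]
      rw [hb1, hb2]
      ring
    have hfun : auxF f Λp Λm Λhp Λhm p phat t = fun s' =>
        (∫ y in (-1:ℝ)..f t s', p t (s', y)) +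
          (∫ y in f t s'..(1:ℝ), phat t (s', y)) +
          (∫ y in (-1:ℝ)..f t s', (Λm t (s', y)).1 * (Λp t (s', y)).1) +
          ∫ y in f t s'..(1:ℝ), (Λhm t (s', y)).1 * (Λhp t (s', y)).1 := rfl
    rw [hfun]
    refine hsum.congr_deriv (Eq.symm ?_)
    have h1 := kA t s; have h2 := kC t s; have h3 := kAh t s; have h4 := kCh t s
    have h5 := hstar s; have h6 := hpress t s
    linear_combination (-1 : ℝ) * hJlow - hJup - deriv (f t) s * h6 + (1/2) * h5
      - (1/2) * (1 + (Λm t (s, f t s)).1) * h1 - (1/2) * ((Λp t (s, f t s)).1 - 1) * h2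
      + (1/2) * (1 + (Λhm t (s, f t s)).1) * h3 + (1/2) * ((Λhp t (s, f t s)).1 - 1) * h4
  -- F vanishes identically
  have hF0 : ∀ s, auxF f Λp Λm Λhp Λhm p phat t s = 0 := by
    apply zero_of_const_small
    · exact fun a b => is_const_of_deriv_eq_zero (fun x => (hFx x).differentiableAt)
        (fun x => (hFx x).deriv) a b
    · intro ε hε hε1
      obtain ⟨R, hR⟩ := hdecay t ε hε
      refine ⟨R, ?_⟩
      have hc1 : (-1:ℝ) ≤ f t R := le_of_lt (hfamp t R).1
      have hc2 : f t R ≤ 1 := le_of_lt (hfamp t R).2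
      have hε0 : 0 ≤ ε := le_of_lt hε
      have b1 : |∫ y in (-1:ℝ)..f t R, p t (R, y)| ≤ 4 * ε := by
        apply strip_integral_bound (cont_slice2 (spp t).continuous R) le_rfl hc1 hc2
        intro y hy1 hy2
        obtain ⟨w1, -⟩ := hR R le_rfl y ⟨hy1, by linarith⟩
        linarith
      have b2 : |∫ y in f t R..(1:ℝ), phat t (R, y)| ≤ 4 * ε := by
        apply strip_integral_bound (cont_slice2 (sph t).continuous R) hc1 hc2 le_rfl
        intro y hy1 hy2
        obtain ⟨-, w2, -⟩ := hR R le_rfl y ⟨by linarith, hy2⟩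
        linarith
      have b3 : |∫ y in (-1:ℝ)..f t R, (Λm t (R, y)).1 * (Λp t (R, y)).1| ≤ 4 * ε := by
        apply strip_integral_bound ((cont_field1 hΛm t R).fun_mul (cont_field1 hΛp t R)) le_rfl hc1 hc2
        intro y hy1 hy2
        obtain ⟨-, -, w3, w4, -⟩ := hR R le_rfl y ⟨hy1, by linarith⟩
        have e1 : |(Λp t (R, y)).1| ≤ ε :=
          le_trans (by rw [← Real.norm_eq_abs]; exact norm_fst_le _) w3
        have e2 : |(Λm t (R, y)).1| ≤ ε :=
          le_trans (by rw [← Real.norm_eq_abs]; exact norm_fst_le _) w4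
        rw [abs_mul]
        calc |(Λm t (R, y)).1| * |(Λp t (R, y)).1| ≤ ε * ε := by
              apply mul_le_mul e2 e1 (abs_nonneg _) hε0
          _ ≤ 2 * ε := by nlinarith
      have b4 : |∫ y in f t R..(1:ℝ), (Λhm t (R, y)).1 * (Λhp t (R, y)).1| ≤ 4 * ε := by
        apply strip_integral_bound ((cont_field1 hΛhm t R).fun_mul (cont_field1 hΛhp t R)) hc1 hc2 le_rfl
        intro y hy1 hy2
        obtain ⟨-, -, -, -, w5, w6, -⟩ := hR R le_rfl y ⟨by linarith, hy2⟩
        have e1 : |(Λhp t (R, y)).1| ≤ ε :=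
          le_trans (by rw [← Real.norm_eq_abs]; exact norm_fst_le _) w5
        have e2 : |(Λhm t (R, y)).1| ≤ ε :=
          le_trans (by rw [← Real.norm_eq_abs]; exact norm_fst_le _) w6
        rw [abs_mul]
        calc |(Λhm t (R, y)).1| * |(Λhp t (R, y)).1| ≤ ε * ε := by
              apply mul_le_mul e2 e1 (abs_nonneg _) hε0
          _ ≤ 2 * ε := by nlinarith
      have hrfl : auxF f Λp Λm Λhp Λhm p phat t R =
          (∫ y in (-1:ℝ)..f t R, p t (R, y)) + (∫ y in f t R..(1:ℝ), phat t (R, y)) +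
          (∫ y in (-1:ℝ)..f t R, (Λm t (R, y)).1 * (Λp t (R, y)).1) +
          ∫ y in f t R..(1:ℝ), (Λhm t (R, y)).1 * (Λhp t (R, y)).1 := rfl
      rw [hrfl]
      have hab1 := abs_add_le ((∫ y in (-1:ℝ)..f t R, p t (R, y)) +
        (∫ y in f t R..(1:ℝ), phat t (R, y)) +
        (∫ y in (-1:ℝ)..f t R, (Λm t (R, y)).1 * (Λp t (R, y)).1))
        (∫ y in f t R..(1:ℝ), (Λhm t (R, y)).1 * (Λhp t (R, y)).1)
      have hab2 := abs_add_le ((∫ y in (-1:ℝ)..f t R, p t (R, y)) +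
        (∫ y in f t R..(1:ℝ), phat t (R, y)))
        (∫ y in (-1:ℝ)..f t R, (Λm t (R, y)).1 * (Λp t (R, y)).1)
      have hab3 := abs_add_le (∫ y in (-1:ℝ)..f t R, p t (R, y))
        (∫ y in f t R..(1:ℝ), phat t (R, y))
      linarith
  -- conclusion
  have hle1 : (-1:ℝ) ≤ f t x₁ := le_of_lt (hfamp t x₁).1
  have hle2 : f t x₁ ≤ 1 := le_of_lt (hfamp t x₁).2
  have g1 : (∫ y in Set.Ioo (-1:ℝ) (f t x₁), p t (x₁, y)) =
      ∫ y in (-1:ℝ)..f t x₁, p t (x₁, y) := by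
    rw [intervalIntegral.integral_of_le hle1, MeasureTheory.integral_Ioc_eq_integral_Ioo]
  have g2 : (∫ y in Set.Ioo (f t x₁) (1:ℝ), phat t (x₁, y)) =
      ∫ y in f t x₁..(1:ℝ), phat t (x₁, y) := by
    rw [intervalIntegral.integral_of_le hle2, MeasureTheory.integral_Ioc_eq_integral_Ioo]
  have g3 : (∫ y in Set.Ioo (-1:ℝ) (f t x₁), (Λm t (x₁, y)).1 * (Λp t (x₁, y)).1) =
      ∫ y in (-1:ℝ)..f t x₁, (Λm t (x₁, y)).1 * (Λp t (x₁, y)).1 := by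
    rw [intervalIntegral.integral_of_le hle1, MeasureTheory.integral_Ioc_eq_integral_Ioo]
  have g4 : (∫ y in Set.Ioo (f t x₁) (1:ℝ), (Λhm t (x₁, y)).1 * (Λhp t (x₁, y)).1) =
      ∫ y in f t x₁..(1:ℝ), (Λhm t (x₁, y)).1 * (Λhp t (x₁, y)).1 := by
    rw [intervalIntegral.integral_of_le hle2, MeasureTheory.integral_Ioc_eq_integral_Ioo]
  rw [g1, g2, g3, g4]
  exact hF0 x₁
end

section
/- Second-order evolution equation for the free surface: let $(Z_\pm, \hat{Z}_\pm, p, \hat{p}, f)$ be a smooth solution of the 2D incompressible MHD current-vortex sheet system in Elsässer variables. Then the interface graph satisfies $\partial_t^2 f = -\frac{1}{2} (\underline{Z_+^1} + \underline{Z_-^1} + \underline{\hat{Z}_+^1} + \underline{\hat{Z}_-^1}) \partial_1\partial_t f - \frac{1}{2}(\underline{Z_+^1}\,\underline{Z_-^1} + \underline{\hat{Z}_+^1}\,\underline{\hat{Z}_-^1}) \partial_1^2 f - \frac{1}{2} N_f \cdot \underline{\nabla \hat{p}} - \frac{1}{2} N_f \cdot \underline{\nabla p}$. -/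
private lemma curve_deriv {α E : Type*} [NormedAddCommGroup α] [NormedSpace ℝ α]
    [NormedAddCommGroup E] [NormedSpace ℝ E] {φ : α → E} {c : ℝ → α} {c' : α} {t : ℝ}
    (hc : HasDerivAt c c' t) (hφ : DifferentiableAt ℝ φ (c t)) :
    HasDerivAt (fun τ => φ (c τ)) (fderiv ℝ φ (c t) c') t :=
  hφ.hasFDerivAt.comp_hasDerivAt t hc

private lemma clm_apply_deriv {F : Type*} [NormedAddCommGroup F] [NormedSpace ℝ F]
    {G : ℝ → (ℝ × ℝ) →L[ℝ] F} {L : (ℝ × ℝ) →L[ℝ] F} {t : ℝ} (hG : HasDerivAt G L t)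
    (v : ℝ × ℝ) : HasDerivAt (fun τ => G τ v) (L v) t :=
  (ContinuousLinearMap.apply ℝ F v).hasFDerivAt.comp_hasDerivAt t hG

private theorem one_side
    (f : ℝ → ℝ → ℝ) (Z W : ℝ → ℝ × ℝ → ℝ × ℝ) (p : ℝ → ℝ × ℝ → ℝ)
    (hf : ContDiff ℝ (⊤ : ℕ∞) (Function.uncurry f))
    (hZ : ContDiff ℝ (⊤ : ℕ∞) (Function.uncurry Z))
    (heq : ∀ t x₁, deriv (fun τ => Z τ (x₁, f t x₁)) t
        + convDeriv (W t (x₁, f t x₁)) (Z t) (x₁, f t x₁)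
        + grad2 (p t) (x₁, f t x₁) = 0)
    (hkZ : ∀ t x₁, deriv (fun τ => f τ x₁) t = dot2 (Z t (x₁, f t x₁)) (Nf f t x₁))
    (hkW : ∀ t x₁, deriv (fun τ => f τ x₁) t = dot2 (W t (x₁, f t x₁)) (Nf f t x₁))
    (t x₁ : ℝ) :
    deriv (deriv fun τ => f τ x₁) t =
      -((Z t (x₁, f t x₁)).1 + (W t (x₁, f t x₁)).1) *
          deriv (fun y => deriv (fun τ => f τ y) t) x₁ -
        (Z t (x₁, f t x₁)).1 * (W t (x₁, f t x₁)).1 * deriv (deriv (f t)) x₁ -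
        dot2 (Nf f t x₁) (grad2 (p t) (x₁, f t x₁)) := by
  have hfd : Differentiable ℝ (Function.uncurry f) := hf.differentiable (by simp)
  have hZd : Differentiable ℝ (Function.uncurry Z) := hZ.differentiable (by simp)
  have hfd2 : ContDiff ℝ (⊤ : ℕ∞) (fderiv ℝ (Function.uncurry f)) := hf.fderiv_right (by simp)
  -- partial derivative functions of f
  set q : ℝ × ℝ → ℝ := fun z => fderiv ℝ (Function.uncurry f) z (0, 1) with hq
  set r : ℝ × ℝ → ℝ := fun z => fderiv ℝ (Function.uncurry f) z (1, 0) with hr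
  have hfr : ∀ a b : ℝ, HasDerivAt (fun τ => f τ b) (r (a, b)) a := by
    intro a b
    have h := curve_deriv (HasDerivAt.prodMk (hasDerivAt_id' a) (hasDerivAt_const a b)) (hfd (a, b))
    simpa [Function.uncurry_apply_pair] using h
  have hfq : ∀ a b : ℝ, HasDerivAt (fun y => f a y) (q (a, b)) b := by
    intro a b
    have h := curve_deriv (HasDerivAt.prodMk (hasDerivAt_const b a) (hasDerivAt_id' b)) (hfd (a, b))
    simpa [Function.uncurry_apply_pair] using h
  have hderq : ∀ a b : ℝ, deriv (f a) b = q (a, b) := fun a b => (hfq a b).deriv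
  have hderr : ∀ a b : ℝ, deriv (fun τ => f τ b) a = r (a, b) := fun a b => (hfr a b).deriv
  -- second derivatives of f
  set Sf : (ℝ × ℝ) →L[ℝ] (ℝ × ℝ) →L[ℝ] ℝ := fderiv ℝ (fderiv ℝ (Function.uncurry f)) (t, x₁)
    with hSf
  have hSfd : HasDerivAt (fun τ => fderiv ℝ (Function.uncurry f) (τ, x₁)) (Sf (1, 0)) t :=
    curve_deriv (HasDerivAt.prodMk (hasDerivAt_id' t) (hasDerivAt_const t x₁)) (hfd2.differentiable (by simp) (t, x₁))
  have hSfx : HasDerivAt (fun y => fderiv ℝ (Function.uncurry f) (t, y)) (Sf (0, 1)) x₁ :=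
    curve_deriv (HasDerivAt.prodMk (hasDerivAt_const x₁ t) (hasDerivAt_id' x₁)) (hfd2.differentiable (by simp) (t, x₁))
  have hqt : HasDerivAt (fun τ => q (τ, x₁)) (Sf (1, 0) (0, 1)) t := clm_apply_deriv hSfd _
  have hrx : HasDerivAt (fun y => r (t, y)) (Sf (0, 1) (1, 0)) x₁ := clm_apply_deriv hSfx _
  have hqx : HasDerivAt (fun y => q (t, y)) (Sf (0, 1) (0, 1)) x₁ := clm_apply_deriv hSfx _
  have hsymm : Sf (1, 0) (0, 1) = Sf (0, 1) (1, 0) :=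
    second_derivative_symmetric (fun y => (hfd y).hasFDerivAt)
      (hfd2.differentiable (by simp) (t, x₁)).hasFDerivAt _ _
  -- notation for the interface point and Z-derivative components
  set X : ℝ × ℝ := (x₁, f t x₁) with hX
  set P1 : ℝ × ℝ := fderiv ℝ (Function.uncurry Z) (t, X) (1, 0) with hP1
  set P2 : ℝ × ℝ := fderiv ℝ (Function.uncurry Z) (t, X) (0, (1, 0)) with hP2
  set P3 : ℝ × ℝ := fderiv ℝ (Function.uncurry Z) (t, X) (0, (0, 1)) with hP3
  -- time derivative of the trace of Z on the moving interface
  have hZtr : HasDerivAt (fun τ => Z τ (x₁, f τ x₁)) (P1 + r (t, x₁) • P3) t := by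
    have h := curve_deriv
      (HasDerivAt.prodMk (hasDerivAt_id' t) (HasDerivAt.prodMk (hasDerivAt_const t x₁) (hfr t x₁)))
      (hZd (t, (x₁, f t x₁)))
    have hv : ((1 : ℝ), ((0 : ℝ), r (t, x₁)))
        = ((1 : ℝ), (0 : ℝ × ℝ)) + r (t, x₁) • ((0 : ℝ), ((0 : ℝ), (1 : ℝ))) := by
      simp [Prod.ext_iff]
    rw [hv, map_add, map_smul] at h
    simpa [Function.uncurry_apply_pair] using h
  -- space derivative of the trace of Z on the interface at time t
  have hZx : HasDerivAt (fun y => Z t (y, f t y)) (P2 + q (t, x₁) • P3) x₁ := by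
    have h := curve_deriv
      (HasDerivAt.prodMk (hasDerivAt_const x₁ t) (HasDerivAt.prodMk (hasDerivAt_id' x₁) (hfq t x₁)))
      (hZd (t, (x₁, f t x₁)))
    have hv : ((0 : ℝ), ((1 : ℝ), q (t, x₁)))
        = ((0 : ℝ), ((1 : ℝ), (0 : ℝ))) + q (t, x₁) • ((0 : ℝ), ((0 : ℝ), (1 : ℝ))) := by
      simp [Prod.ext_iff]
    rw [hv, map_add, map_smul] at h
    simpa [Function.uncurry_apply_pair] using h
  -- scalar components
  have h1 : HasDerivAt (fun τ => (Z τ (x₁, f τ x₁)).1) (P1.1 + r (t, x₁) * P3.1) t := by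
    have h := (ContinuousLinearMap.fst ℝ ℝ ℝ).hasFDerivAt.comp_hasDerivAt t hZtr
    simpa [Function.comp_def, smul_eq_mul] using h
  have h2 : HasDerivAt (fun τ => (Z τ (x₁, f τ x₁)).2) (P1.2 + r (t, x₁) * P3.2) t := by
    have h := (ContinuousLinearMap.snd ℝ ℝ ℝ).hasFDerivAt.comp_hasDerivAt t hZtr
    simpa [Function.comp_def, smul_eq_mul] using h
  have hx1 : HasDerivAt (fun y => (Z t (y, f t y)).1) (P2.1 + q (t, x₁) * P3.1) x₁ := by
    have h := (ContinuousLinearMap.fst ℝ ℝ ℝ).hasFDerivAt.comp_hasDerivAt x₁ hZx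
    simpa [Function.comp_def, smul_eq_mul] using h
  have hx2 : HasDerivAt (fun y => (Z t (y, f t y)).2) (P2.2 + q (t, x₁) * P3.2) x₁ := by
    have h := (ContinuousLinearMap.snd ℝ ℝ ℝ).hasFDerivAt.comp_hasDerivAt x₁ hZx
    simpa [Function.comp_def, smul_eq_mul] using h
  -- kinematic identity as a function of time
  have hgfun : deriv (fun τ => f τ x₁)
      = fun τ => (-(Z τ (x₁, f τ x₁)).1) * q (τ, x₁) + (Z τ (x₁, f τ x₁)).2 := by
    funext τ
    rw [hkZ τ x₁]
    simp [dot2, Nf, hderq]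
  have E1 : deriv (deriv fun τ => f τ x₁) t
      = -(P1.1 + r (t, x₁) * P3.1) * q (t, x₁)
        + (-(Z t X).1) * (Sf (1, 0) (0, 1)) + (P1.2 + r (t, x₁) * P3.2) := by
    rw [hgfun]
    exact ((h1.neg.mul hqt).add h2).deriv
  -- kinematic identity as a function of space
  have hxfun2 : (fun y => deriv (fun τ => f τ y) t) = fun y => r (t, y) := by
    funext y; exact hderr t y
  have hm : deriv (fun y => deriv (fun τ => f τ y) t) x₁ = Sf (0, 1) (1, 0) := by
    rw [hxfun2]; exact hrx.deriv
  have hxfun : (fun y => r (t, y))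
      = fun y => (-(Z t (y, f t y)).1) * q (t, y) + (Z t (y, f t y)).2 := by
    funext y
    rw [← hderr t y, hkZ t y]
    simp [dot2, Nf, hderq]
  have E2 : Sf (0, 1) (1, 0)
      = -(P2.1 + q (t, x₁) * P3.1) * q (t, x₁)
        + (-(Z t X).1) * (Sf (0, 1) (0, 1)) + (P2.2 + q (t, x₁) * P3.2) := by
    rw [← hrx.deriv, hxfun]
    exact ((hx1.neg.mul hqx).add hx2).deriv
  have hfxx : deriv (deriv (f t)) x₁ = Sf (0, 1) (0, 1) := by
    have hft : deriv (f t) = fun y => q (t, y) := by funext y; exact hderq t y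
    rw [hft]; exact hqx.deriv
  -- the Elsässer equation at the interface point
  have hdZ : deriv (fun τ => Z τ X) t = P1 := by
    have h := curve_deriv (HasDerivAt.prodMk (hasDerivAt_id' t) (hasDerivAt_const t X)) (hZd (t, X))
    have h2 := h.deriv
    simpa [Function.uncurry_apply_pair] using h2
  have hslice : ∀ v : ℝ × ℝ, fderiv ℝ (Z t) X v
      = fderiv ℝ (Function.uncurry Z) (t, X) ((0 : ℝ), v) := by
    intro v
    have h0 : HasFDerivAt (fun x : ℝ × ℝ => Function.uncurry Z (t, x))
        ((fderiv ℝ (Function.uncurry Z) (t, X)).comp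
          ((0 : (ℝ × ℝ) →L[ℝ] ℝ).prod (ContinuousLinearMap.id ℝ (ℝ × ℝ)))) X :=
      (hZd (t, X)).hasFDerivAt.comp X (HasFDerivAt.prodMk (hasFDerivAt_const t X) (hasFDerivAt_id X))
    have h0' : HasFDerivAt (Z t)
        ((fderiv ℝ (Function.uncurry Z) (t, X)).comp
          ((0 : (ℝ × ℝ) →L[ℝ] ℝ).prod (ContinuousLinearMap.id ℝ (ℝ × ℝ)))) X := by
      simpa [Function.uncurry_apply_pair] using h0
    rw [h0'.fderiv]
    simp
  have hconv : convDeriv (W t X) (Z t) X = (W t X).1 • P2 + (W t X).2 • P3 := by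
    rw [convDeriv, hslice, hslice]
  have hP1eq : P1 = -((W t X).1 • P2 + (W t X).2 • P3 + grad2 (p t) X) := by
    have h := heq t x₁
    rw [← hX] at h
    rw [hdZ, hconv] at h
    rw [add_assoc] at h
    exact eq_neg_of_add_eq_zero_left h
  have E3a : P1.1 = -((W t X).1 * P2.1 + (W t X).2 * P3.1 + fderiv ℝ (p t) X (1, 0)) := by
    have h := congrArg Prod.fst hP1eq
    simpa [grad2, smul_eq_mul] using h
  have E3b : P1.2 = -((W t X).1 * P2.2 + (W t X).2 * P3.2 + fderiv ℝ (p t) X (0, 1)) := by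
    have h := congrArg Prod.snd hP1eq
    simpa [grad2, smul_eq_mul] using h
  -- kinematic condition for W at (t, x₁)
  have E4 : r (t, x₁) = -(W t X).1 * q (t, x₁) + (W t X).2 := by
    have h := hkW t x₁
    rw [hderr t x₁] at h
    rw [← hX] at h
    simp [dot2, Nf, hderq] at h
    linarith
  -- assemble
  rw [hm, hfxx]
  have hdot : dot2 (Nf f t x₁) (grad2 (p t) X)
      = -(q (t, x₁)) * fderiv ℝ (p t) X (1, 0) + fderiv ℝ (p t) X (0, 1) := by
    simp [dot2, Nf, grad2, hderq]
  rw [hdot]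
  linear_combination E1 - (Z t X).1 * hsymm - q (t, x₁) * E3a + E3b
    + (W t X).1 * E2 - (q (t, x₁) * P3.1 - P3.2) * E4


/-- Second-order evolution equation for the free surface: for a smooth solution
`(Z_±, Ẑ_±, p, p̂, f)` of the 2D incompressible MHD current-vortex sheet system in
Elsässer variables, the interface graph satisfies
`∂_t²f = -½(Z̲₊¹+Z̲₋¹+Ẑ̲₊¹+Ẑ̲₋¹)∂₁∂_t f - ½(Z̲₊¹Z̲₋¹+Ẑ̲₊¹Ẑ̲₋¹)∂₁²f
        - ½ N_f·∇p̲̂ - ½ N_f·∇p̲`. -/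
theorem free_surface_second_order_equation
    (f : ℝ → ℝ → ℝ) (Zp Zm Zhp Zhm : ℝ → ℝ × ℝ → ℝ × ℝ) (p phat : ℝ → ℝ × ℝ → ℝ)
    (hf : ContDiff ℝ (⊤ : ℕ∞) (Function.uncurry f))
    (hZp : ContDiff ℝ (⊤ : ℕ∞) (Function.uncurry Zp)) (hZm : ContDiff ℝ (⊤ : ℕ∞) (Function.uncurry Zm))
    (hZhp : ContDiff ℝ (⊤ : ℕ∞) (Function.uncurry Zhp))
    (hZhm : ContDiff ℝ (⊤ : ℕ∞) (Function.uncurry Zhm))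
    (hp : ContDiff ℝ (⊤ : ℕ∞) (Function.uncurry p)) (hphat : ContDiff ℝ (⊤ : ℕ∞) (Function.uncurry phat))
    (hfamp : ∀ t x₁, -1 < f t x₁ ∧ f t x₁ < 1)
    -- Elsässer equations in the lower region (up to the interface)
    (heqp : ∀ t x, -1 ≤ x.2 → x.2 ≤ f t x.1 →
      deriv (fun τ => Zp τ x) t + convDeriv (Zm t x) (Zp t) x + grad2 (p t) x = 0)
    (heqm : ∀ t x, -1 ≤ x.2 → x.2 ≤ f t x.1 →
      deriv (fun τ => Zm τ x) t + convDeriv (Zp t x) (Zm t) x + grad2 (p t) x = 0)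
    (hdivL : ∀ t x, -1 ≤ x.2 → x.2 ≤ f t x.1 → div2 (Zp t) x = 0 ∧ div2 (Zm t) x = 0)
    -- Elsässer equations in the upper region (down to the interface)
    (heqhp : ∀ t x, f t x.1 ≤ x.2 → x.2 ≤ 1 →
      deriv (fun τ => Zhp τ x) t + convDeriv (Zhm t x) (Zhp t) x + grad2 (phat t) x = 0)
    (heqhm : ∀ t x, f t x.1 ≤ x.2 → x.2 ≤ 1 →
      deriv (fun τ => Zhm τ x) t + convDeriv (Zhp t x) (Zhm t) x + grad2 (phat t) x = 0)
    (hdivU : ∀ t x, f t x.1 ≤ x.2 → x.2 ≤ 1 → div2 (Zhp t) x = 0 ∧ div2 (Zhm t) x = 0)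
    -- kinematic boundary condition: ∂_t f = Z_± · N_f = Ẑ_± · N_f on Γ_f
    (hkin : ∀ t x₁,
      deriv (fun τ => f τ x₁) t = dot2 (Zp t (x₁, f t x₁)) (Nf f t x₁) ∧
      deriv (fun τ => f τ x₁) t = dot2 (Zm t (x₁, f t x₁)) (Nf f t x₁) ∧
      deriv (fun τ => f τ x₁) t = dot2 (Zhp t (x₁, f t x₁)) (Nf f t x₁) ∧
      deriv (fun τ => f τ x₁) t = dot2 (Zhm t (x₁, f t x₁)) (Nf f t x₁)) :
    ∀ t x₁ : ℝ,
      deriv (deriv fun τ => f τ x₁) t =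
        -(1 / 2) * ((Zp t (x₁, f t x₁)).1 + (Zm t (x₁, f t x₁)).1 +
              (Zhp t (x₁, f t x₁)).1 + (Zhm t (x₁, f t x₁)).1) *
            deriv (fun y => deriv (fun τ => f τ y) t) x₁ -
          1 / 2 * ((Zp t (x₁, f t x₁)).1 * (Zm t (x₁, f t x₁)).1 +
              (Zhp t (x₁, f t x₁)).1 * (Zhm t (x₁, f t x₁)).1) *
            deriv (deriv (f t)) x₁ -
          1 / 2 * dot2 (Nf f t x₁) (grad2 (phat t) (x₁, f t x₁)) -
          1 / 2 * dot2 (Nf f t x₁) (grad2 (p t) (x₁, f t x₁)) := by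
  intro t x₁
  have hA := one_side f Zp Zm p hf hZp
    (fun t x₁ => heqp t (x₁, f t x₁) (hfamp t x₁).1.le (le_refl _))
    (fun t x₁ => (hkin t x₁).1) (fun t x₁ => (hkin t x₁).2.1) t x₁
  have hB := one_side f Zhp Zhm phat hf hZhp
    (fun t x₁ => heqhp t (x₁, f t x₁) (le_refl _) (hfamp t x₁).2.le)
    (fun t x₁ => (hkin t x₁).2.2.1) (fun t x₁ => (hkin t x₁).2.2.2) t x₁
  linear_combination (hA + hB) / 2
end
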